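/- If g ∈ H²(𝔻) has a limit L ≠ 0 as z → 1 within 𝔻, then the sequence C_{φ_a}^n g = g ∘ φ_{a^n} converges weakly in H²(𝔻) to the constant function L, and consequently the constant function L belongs to the cyclic subspace K_g = closed span of {C_{φ_a}^n g : n ≥ 0}. -/

import Mathlib

/-!
The maps `φ_{a^n}` squeeze the disc into the disc of radius `2 a^n` around `1`, so
`g ∘ φ_{a^n} → L` uniformly on `𝔻`. For a bounded holomorphic function the `H²` norm is at most
the sup norm (Parseval on the circles `|z| = r`, then `r → 1`), so the convergence even holds in
`H²` norm: this gives the weak convergence by Cauchy–Schwarz, and `L` is approximated by a single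
`C_{φ_a}^n g`.
-/

open Complex Metric Filter

noncomputable def hardyCoeff (f : ℂ → ℂ) (n : ℕ) : ℂ := iteratedDeriv n f 0 / n.factorial

/-- `f` belongs to the Hardy space `H²(𝔻)`. -/
def MemH2 (f : ℂ → ℂ) : Prop :=
  AnalyticOnNhd ℂ f (ball (0:ℂ) 1) ∧ Summable (fun n => ‖hardyCoeff f n‖ ^ 2)

/-- The `H²` norm of `f`, computed from Taylor coefficients. -/
noncomputable def h2Norm (f : ℂ → ℂ) : ℝ := Real.sqrt (∑' n, ‖hardyCoeff f n‖ ^ 2)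

/-- The  inner product. -/
noncomputable def h2Inner (f g : ℂ → ℂ) : ℂ :=
  ∑' n, hardyCoeff f n * (starRingEnd ℂ) (hardyCoeff g n)

open Real in
theorem fourierCoeffOn_comp_circleMap {f : ℂ → ℂ} {r : ℝ} (hr : 0 < r)
    (hf : DifferentiableOn ℂ f (closedBall 0 r)) (n : ℕ) :
    fourierCoeffOn two_pi_pos (fun θ => f (circleMap 0 r θ)) n = hardyCoeff f n * r ^ n := by
  have cauchy := hf.circleIntegral_one_div_sub_center_pow_smul hr n
  have integrand : ∀ θ : ℝ, deriv (circleMap 0 r) θ • (1 / (circleMap 0 r θ - 0) ^ (n + 1)) •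
      f (circleMap 0 r θ) = (I * ((r : ℂ) ^ n)⁻¹) *
        (fourier (-(n : ℤ)) (θ : AddCircle (2 * π - 0)) • f (circleMap 0 r θ)) := by
    intro θ
    have hr' : (r : ℂ) ≠ 0 := by exact_mod_cast hr.ne'
    simp only [deriv_circleMap, circleMap_zero, fourier_coe_apply, smul_eq_mul, sub_zero]
    have : 2 * (π : ℂ) * I * ((-(n : ℤ) : ℤ) : ℂ) * θ / ((2 * π : ℝ) : ℂ) = -(n * (θ * I)) := by
      push_cast; field_simp
    rw [this, Complex.exp_neg, Complex.exp_nat_mul]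
    field_simp
    ring
  simp_rw [circleIntegral, integrand, intervalIntegral.integral_const_mul] at cauchy
  rw [fourierCoeffOn_eq_integral, hardyCoeff]
  set J := ∫ θ in (0:ℝ)..2 * π, fourier (-(n : ℤ)) (θ : AddCircle (2 * π - 0)) • f (circleMap 0 r θ)
  have hrn : (r : ℂ) ^ n ≠ 0 := by exact_mod_cast (pow_pos hr n).ne'
  have hJ : J = 2 * π * r ^ n * (iteratedDeriv n f 0 / n.factorial) := by
    rw [smul_eq_mul] at cauchy
    field_simp at cauchy ⊢
    linear_combination cauchy
  rw [hJ, sub_zero, Complex.real_smul]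
  push_cast
  field_simp

open Real MeasureTheory Set in
theorem sum_sq_norm_hardyCoeff_mul_pow_le {f : ℂ → ℂ} {r M : ℝ} (hr : 0 < r)
    (hf : DifferentiableOn ℂ f (closedBall 0 r)) (hM : ∀ z ∈ sphere (0 : ℂ) r, ‖f z‖ ≤ M)
    (s : Finset ℕ) : ∑ k ∈ s, ‖hardyCoeff f k‖ ^ 2 * r ^ (2 * k) ≤ M ^ 2 := by
  set F : ℝ → ℂ := fun θ => f (circleMap 0 r θ)
  have hFM : ∀ θ, ‖F θ‖ ≤ M := fun θ => hM _ (circleMap_mem_sphere 0 hr.le θ)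
  have hF : Continuous F := hf.continuousOn.comp_continuous (continuous_circleMap 0 r)
    fun θ => circleMap_mem_closedBall 0 hr.le θ
  have parseval := hasSum_sq_fourierCoeffOn two_pi_pos
    (MemLp.of_bound hF.aestronglyMeasurable M (ae_of_all _ hFM) : MemLp F 2 _)
  calc ∑ k ∈ s, ‖hardyCoeff f k‖ ^ 2 * r ^ (2 * k)
      = ∑ i ∈ s.map Nat.castEmbedding, ‖fourierCoeffOn two_pi_pos F i‖ ^ 2 := by
        simp only [Finset.sum_map, Nat.castEmbedding_apply, fourierCoeffOn_comp_circleMap hr hf,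
          F, norm_mul, mul_pow, norm_pow, Complex.norm_real, norm_eq_abs, abs_of_pos hr, ← pow_mul,
          mul_comm 2]
    _ ≤ (2 * π - 0)⁻¹ • ∫ θ in (0 : ℝ)..2 * π, ‖F θ‖ ^ 2 :=
        sum_le_hasSum _ (fun _ _ => by positivity) parseval
    _ ≤ (2 * π)⁻¹ * ∫ _ in (0 : ℝ)..2 * π, M ^ 2 := by
        rw [sub_zero, smul_eq_mul]
        gcongr
        exact intervalIntegral.integral_mono two_pi_pos.le
          ((hF.norm.pow 2).intervalIntegrable _ _) intervalIntegrable_const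
          fun θ => pow_le_pow_left₀ (norm_nonneg _) (hFM θ) 2
    _ = M ^ 2 := by
        rw [intervalIntegral.integral_const, sub_zero, smul_eq_mul]
        field_simp

open Set Topology in
theorem sum_sq_norm_hardyCoeff_le {f : ℂ → ℂ} {M : ℝ}
    (hf : DifferentiableOn ℂ f (ball 0 1)) (hM : ∀ z ∈ ball (0 : ℂ) 1, ‖f z‖ ≤ M)
    (s : Finset ℕ) : ∑ k ∈ s, ‖hardyCoeff f k‖ ^ 2 ≤ M ^ 2 := by
  have hlim : Tendsto (fun r : ℝ => ∑ k ∈ s, ‖hardyCoeff f k‖ ^ 2 * r ^ (2 * k)) (𝓝[<] 1)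
      (𝓝 (∑ k ∈ s, ‖hardyCoeff f k‖ ^ 2)) := by
    have : Continuous (fun r : ℝ => ∑ k ∈ s, ‖hardyCoeff f k‖ ^ 2 * r ^ (2 * k)) := by fun_prop
    simpa using (this.tendsto 1).mono_left nhdsWithin_le_nhds
  refine le_of_tendsto hlim ?_
  filter_upwards [Ioo_mem_nhdsLT zero_lt_one] with r ⟨hr0, hr1⟩
  exact sum_sq_norm_hardyCoeff_mul_pow_le hr0 (hf.mono (closedBall_subset_ball hr1))
    (fun z hz => hM z (sphere_subset_closedBall.trans (closedBall_subset_ball hr1) hz)) s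

theorem summable_sq_norm_hardyCoeff_of_bounded {f : ℂ → ℂ} {M : ℝ}
    (hf : DifferentiableOn ℂ f (ball 0 1)) (hM : ∀ z ∈ ball (0 : ℂ) 1, ‖f z‖ ≤ M) :
    Summable fun n => ‖hardyCoeff f n‖ ^ 2 :=
  summable_of_sum_range_le (fun _ => by positivity) fun n => sum_sq_norm_hardyCoeff_le hf hM _

theorem h2Norm_nonneg (f : ℂ → ℂ) : 0 ≤ h2Norm f :=
  Real.sqrt_nonneg _

theorem h2Norm_le_of_bounded {f : ℂ → ℂ} {M : ℝ}
    (hf : DifferentiableOn ℂ f (ball 0 1)) (hM : ∀ z ∈ ball (0 : ℂ) 1, ‖f z‖ ≤ M) :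
    h2Norm f ≤ M := by
  have hM0 : 0 ≤ M := (norm_nonneg _).trans (hM 0 (mem_ball_self one_pos))
  rw [h2Norm, Real.sqrt_le_left hM0]
  exact (summable_sq_norm_hardyCoeff_of_bounded hf hM).tsum_le_of_sum_range_le
    fun n => sum_sq_norm_hardyCoeff_le hf hM _

theorem hardyCoeff_sub {f g : ℂ → ℂ} (hf : AnalyticAt ℂ f 0) (hg : AnalyticAt ℂ g 0) (n : ℕ) :
    hardyCoeff (f - g) n = hardyCoeff f n - hardyCoeff g n := by
  rw [hardyCoeff, iteratedDeriv_sub hf.contDiffAt hg.contDiffAt, sub_div]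
  rfl

noncomputable def hardyCoeffLp (f : ℂ → ℂ) (hf : Summable fun n => ‖hardyCoeff f n‖ ^ 2) :
    lp (fun _ : ℕ => ℂ) 2 :=
  ⟨hardyCoeff f, memℓp_gen (by simpa using hf)⟩

theorem h2Inner_eq_inner {f g : ℂ → ℂ} (hf : Summable fun n => ‖hardyCoeff f n‖ ^ 2)
    (hg : Summable fun n => ‖hardyCoeff g n‖ ^ 2) :
    h2Inner f g = inner ℂ (hardyCoeffLp g hg) (hardyCoeffLp f hf) := by
  rw [lp.inner_eq_tsum, h2Inner]
  simp [hardyCoeffLp]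

theorem h2Norm_eq_norm {f : ℂ → ℂ} (hf : Summable fun n => ‖hardyCoeff f n‖ ^ 2) :
    h2Norm f = ‖hardyCoeffLp f hf‖ := by
  rw [lp.norm_eq_tsum_rpow (by simp), h2Norm, Real.sqrt_eq_rpow]
  simp [hardyCoeffLp]

theorem norm_h2Inner_le {f g : ℂ → ℂ} (hf : Summable fun n => ‖hardyCoeff f n‖ ^ 2)
    (hg : Summable fun n => ‖hardyCoeff g n‖ ^ 2) : ‖h2Inner f g‖ ≤ h2Norm f * h2Norm g := by
  rw [h2Inner_eq_inner hf hg, h2Norm_eq_norm hf, h2Norm_eq_norm hg, mul_comm]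
  exact norm_inner_le_norm _ _

theorem h2Inner_sub {f g h : ℂ → ℂ} (hf : Summable fun n => ‖hardyCoeff f n‖ ^ 2)
    (hg : Summable fun n => ‖hardyCoeff g n‖ ^ 2) (hh : Summable fun n => ‖hardyCoeff h n‖ ^ 2)
    (hfg : Summable fun n => ‖hardyCoeff (f - g) n‖ ^ 2)
    (hf₀ : AnalyticAt ℂ f 0) (hg₀ : AnalyticAt ℂ g 0) :
    h2Inner (f - g) h = h2Inner f h - h2Inner g h := by
  rw [h2Inner_eq_inner hfg hh, h2Inner_eq_inner hf hh, h2Inner_eq_inner hg hh, ← inner_sub_right]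
  congr 1
  ext n
  exact hardyCoeff_sub hf₀ hg₀ n

section UniformLimits

variable {ι : Type*} {l : Filter ι} {F : ι → ℂ → ℂ} {f : ℂ → ℂ}

theorem tendsto_h2Norm_sub_of_tendstoUniformlyOn
    (hF : ∀ i, DifferentiableOn ℂ (F i) (ball 0 1)) (hf : DifferentiableOn ℂ f (ball 0 1))
    (hu : TendstoUniformlyOn F f l (ball 0 1)) :
    Tendsto (fun i => h2Norm (f - F i)) l (nhds 0) := by
  rw [Metric.tendsto_nhds]
  intro ε hε
  filter_upwards [Metric.tendstoUniformlyOn_iff.1 hu (ε / 2) (by positivity)] with i hi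
  rw [Real.dist_0_eq_abs, abs_of_nonneg (h2Norm_nonneg _)]
  refine (h2Norm_le_of_bounded (hf.sub (hF i)) fun z hz => ?_).trans_lt (half_lt_self hε)
  simpa [dist_eq_norm] using (hi z hz).le

theorem tendsto_h2Inner_of_tendstoUniformlyOn {h : ℂ → ℂ} {M : ℝ}
    (hF : ∀ i, DifferentiableOn ℂ (F i) (ball 0 1)) (hf : DifferentiableOn ℂ f (ball 0 1))
    (hfM : ∀ z ∈ ball (0 : ℂ) 1, ‖f z‖ ≤ M) (hu : TendstoUniformlyOn F f l (ball 0 1))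
    (hh : Summable fun n => ‖hardyCoeff h n‖ ^ 2) :
    Tendsto (fun i => h2Inner (F i) h) l (nhds (h2Inner f h)) := by
  rw [tendsto_iff_norm_sub_tendsto_zero]
  have hlim := (tendsto_h2Norm_sub_of_tendstoUniformlyOn hF hf hu).mul_const (h2Norm h)
  rw [zero_mul] at hlim
  refine squeeze_zero' (Eventually.of_forall fun _ => norm_nonneg _) ?_ hlim
  filter_upwards [Metric.tendstoUniformlyOn_iff.1 hu 1 one_pos] with i hi
  have hdiff : ∀ z ∈ ball (0 : ℂ) 1, ‖(f - F i) z‖ ≤ 1 := fun z hz => by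
    simpa [dist_eq_norm] using (hi z hz).le
  have hFi : ∀ z ∈ ball (0 : ℂ) 1, ‖F i z‖ ≤ M + 1 := fun z hz =>
    (norm_le_norm_add_norm_sub _ _).trans (add_le_add (hfM z hz) (hdiff z hz))
  have hball : ball (0 : ℂ) 1 ∈ nhds 0 := ball_mem_nhds 0 one_pos
  rw [← norm_neg, neg_sub, ← h2Inner_sub (summable_sq_norm_hardyCoeff_of_bounded hf hfM)
    (summable_sq_norm_hardyCoeff_of_bounded (hF i) hFi) hh
    (summable_sq_norm_hardyCoeff_of_bounded (hf.sub (hF i)) hdiff)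
    (hf.analyticAt hball) ((hF i).analyticAt hball)]
  exact norm_h2Inner_le (summable_sq_norm_hardyCoeff_of_bounded (hf.sub (hF i)) hdiff) hh

end UniformLimits

theorem mul_add_one_sub_mem_ball {t : ℝ} (ht : t ∈ Set.Ioc 0 1) {z : ℂ}
    (hz : z ∈ ball (0 : ℂ) 1) : (t : ℂ) * z + 1 - t ∈ ball (0 : ℂ) 1 := by
  rw [mem_ball_zero_iff] at hz ⊢
  rw [show (t : ℂ) * z + 1 - t = t * z + ((1 - t : ℝ) : ℂ) by push_cast; ring]
  calc ‖(t : ℂ) * z + ((1 - t : ℝ) : ℂ)‖ ≤ t * ‖z‖ + (1 - t) := by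
        refine (norm_add_le _ _).trans_eq ?_
        rw [norm_mul, Complex.norm_real, Complex.norm_real, Real.norm_of_nonneg ht.1.le,
          Real.norm_of_nonneg (sub_nonneg.2 ht.2)]
    _ < 1 := by nlinarith [ht.1]

theorem DifferentiableOn.comp_mul_add_one_sub {g : ℂ → ℂ} (hg : DifferentiableOn ℂ g (ball 0 1))
    {t : ℝ} (ht : t ∈ Set.Ioc 0 1) :
    DifferentiableOn ℂ (fun z => g (t * z + 1 - t)) (ball 0 1) :=
  hg.comp (by fun_prop) fun _ hz => mul_add_one_sub_mem_ball ht hz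

theorem tendstoUniformlyOn_comp_mul_add_one_sub {ι : Type*} {l : Filter ι} {g : ℂ → ℂ} {L : ℂ}
    (hg : Tendsto g (nhdsWithin 1 (ball 0 1)) (nhds L)) {t : ι → ℝ}
    (ht : ∀ i, t i ∈ Set.Ioc 0 1) (ht₀ : Tendsto t l (nhds 0)) :
    TendstoUniformlyOn (fun i z => g (t i * z + 1 - t i)) (fun _ => L) l (ball 0 1) := by
  rw [Metric.tendstoUniformlyOn_iff]
  intro ε hε
  obtain ⟨δ, hδ, hgδ⟩ := Metric.tendsto_nhdsWithin_nhds.1 hg ε hε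
  filter_upwards [ht₀.eventually (gt_mem_nhds (half_pos hδ))] with i hi z hz
  rw [dist_comm]
  refine hgδ (mul_add_one_sub_mem_ball (ht i) hz) ?_
  have hz1 : ‖z - 1‖ < 2 := by
    linarith [norm_sub_le z 1, norm_one (α := ℂ), mem_ball_zero_iff.1 hz]
  calc dist ((t i : ℂ) * z + 1 - t i) 1 = t i * ‖z - 1‖ := by
        rw [dist_eq_norm, show (t i : ℂ) * z + 1 - t i - 1 = t i * (z - 1) by ring, norm_mul,
          Complex.norm_real, Real.norm_of_nonneg (ht i).1.le]
    _ < δ := by nlinarith [(ht i).1]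

theorem constants_in_Kg_general (a : ℝ) (ha : a ∈ Set.Ioo (0:ℝ) 1) (g : ℂ → ℂ) (hg : MemH2 g)
    (L : ℂ)
    (hlim : Tendsto g (nhdsWithin 1 (ball (0:ℂ) 1)) (nhds L)) :
    (∀ h : ℂ → ℂ, MemH2 h →
      Tendsto (fun n : ℕ => h2Inner (fun z => g ((a:ℂ)^n * z + 1 - (a:ℂ)^n)) h)
        atTop (nhds (h2Inner (fun _ => L) h))) ∧
    (∀ ε > 0, ∃ p ∈ Submodule.span ℂ {h : ℂ → ℂ | ∃ n : ℕ,
        h = fun z => g ((a:ℂ)^n * z + 1 - (a:ℂ)^n)},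
      h2Norm ((fun _ => L) - p) < ε) := by
  have hpow : ∀ n : ℕ, a ^ n ∈ Set.Ioc 0 1 := fun n =>
    ⟨pow_pos ha.1 n, pow_le_one₀ ha.1.le ha.2.le⟩
  have hdiff : ∀ n : ℕ,
      DifferentiableOn ℂ (fun z => g ((a:ℂ)^n * z + 1 - (a:ℂ)^n)) (ball 0 1) := fun n => by
    simpa only [Complex.ofReal_pow] using hg.1.differentiableOn.comp_mul_add_one_sub (hpow n)
  have hunif : TendstoUniformlyOn (fun n z => g ((a:ℂ)^n * z + 1 - (a:ℂ)^n)) (fun _ => L)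
      atTop (ball 0 1) := by
    simpa only [Complex.ofReal_pow] using tendstoUniformlyOn_comp_mul_add_one_sub hlim hpow
      (tendsto_pow_atTop_nhds_zero_of_lt_one ha.1.le ha.2)
  have hconst : DifferentiableOn ℂ (fun _ : ℂ => L) (ball 0 1) := differentiableOn_const L
  refine ⟨fun h hh => tendsto_h2Inner_of_tendstoUniformlyOn hdiff hconst
    (fun _ _ => le_rfl) hunif hh.2, fun ε hε => ?_⟩
  obtain ⟨N, hN⟩ := ((tendsto_h2Norm_sub_of_tendstoUniformlyOn hdiff hconst hunif).eventually
    (gt_mem_nhds hε)).exists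
  exact ⟨_, Submodule.subset_span ⟨N, rfl⟩, hN⟩

theorem constants_in_Kg (a : ℝ) (ha : a ∈ Set.Ioo (0:ℝ) 1) (g : ℂ → ℂ) (hg : MemH2 g)
    (L : ℂ) (hL : L ≠ 0)
    (hlim : Tendsto g (nhdsWithin 1 (ball (0:ℂ) 1)) (nhds L)) :
    (∀ h : ℂ → ℂ, MemH2 h →
      Tendsto (fun n : ℕ => h2Inner (fun z => g ((a:ℂ)^n * z + 1 - (a:ℂ)^n)) h)
        atTop (nhds (h2Inner (fun _ => L) h))) ∧
    (∀ ε > 0, ∃ p ∈ Submodule.span ℂ {h : ℂ → ℂ | ∃ n : ℕ,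
        h = fun z => g ((a:ℂ)^n * z + 1 - (a:ℂ)^n)},
      h2Norm ((fun _ => L) - p) < ε) :=
  constants_in_Kg_general a ha g hg L hlim
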